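/- arXiv:2109.00820 — 2 statements merged into one kernel-verified Lean document; each statement's English description precedes it below -/
import Mathlib

section
/- Let $s > 1$ and let $(c_{l,n})_{l\in\mathbb{N}_0,n\in\mathbb{Z}}$ be a double sequence of complex numbers. Suppose that for every double sequence $(a_{l,n})$ with $\sum_{l,n}|a_{l,n}|^2 e^{2h(|n/2|+|l|)^{1/s}} < \infty$ for some $h>0$ one has $\sum_{l,n} |a_{l,n} c_{l,n}| < \infty$. Then for every $k > 0$ the sequence $(e^{-k(|n/2|+|l|)^{1/s}} c_{l,n})$ is bounded. -/
open Real

lemma sumNat (c α : ℝ) (hc : 0 < c) (hα : 0 < α) :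
    Summable fun n : ℕ => Real.exp (-(c * (n : ℝ) ^ α)) := by
  obtain ⟨m, hm⟩ : ∃ m : ℕ, 2 ≤ α * m := by
    refine ⟨⌈2 / α⌉₊, ?_⟩
    have := Nat.le_ceil (2 / α)
    calc (2:ℝ) = α * (2/α) := by field_simp
    _ ≤ α * ⌈2/α⌉₊ := by nlinarith [Nat.le_ceil (2/α)]
  rw [← summable_nat_add_iff 1]
  have hg : Summable fun n : ℕ => ((m.factorial : ℝ) / c ^ m) * (((n:ℝ) + 1) ^ 2)⁻¹ := by
    apply Summable.mul_left
    have h0 : Summable fun n : ℕ => ((n:ℝ) ^ 2)⁻¹ := by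
      simpa [one_div] using Real.summable_one_div_nat_pow.mpr one_lt_two
    exact ((summable_nat_add_iff 1).mpr h0).congr (fun n => by push_cast; ring_nf)
  refine Summable.of_nonneg_of_le (fun n => (Real.exp_pos _).le) (fun n => ?_) hg
  push_cast
  set x : ℝ := ((n:ℕ):ℝ) + 1 with hx
  have hx1 : (1:ℝ) ≤ x := by
    have : (0:ℝ) ≤ (n:ℝ) := Nat.cast_nonneg n
    simp only [hx]; linarith
  have hx0 : (0:ℝ) < x := by positivity
  have key : c ^ m * x ^ 2 / (m.factorial : ℝ) ≤ Real.exp (c * x ^ α) := by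
    have h1 : (c * x ^ α) ^ m / (m.factorial : ℝ) ≤ Real.exp (c * x ^ α) :=
      Real.pow_div_factorial_le_exp _ (by positivity) m
    refine le_trans ?_ h1
    rw [mul_pow, div_le_div_iff_of_pos_right (by positivity : (0:ℝ) < ((m.factorial : ℝ) : ℝ))]
    gcongr
    calc x ^ 2 = x ^ (2:ℝ) := by rw [Real.rpow_two]
    _ ≤ x ^ (α * m) := Real.rpow_le_rpow_of_exponent_le hx1 hm
    _ = (x ^ α) ^ m := by rw [← Real.rpow_natCast (x ^ α) m, ← Real.rpow_mul hx0.le]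
  have hpos : (0:ℝ) < c ^ m * x ^ 2 / (m.factorial : ℝ) := by positivity
  have : Real.exp (-(c * x ^ α)) ≤ (c ^ m * x ^ 2 / (m.factorial : ℝ))⁻¹ := by
    rw [Real.exp_neg]
    exact inv_anti₀ hpos key
  calc Real.exp (-(c * x ^ α)) ≤ (c ^ m * x ^ 2 / (m.factorial : ℝ))⁻¹ := this
  _ = (m.factorial : ℝ) / c ^ m * (x ^ 2)⁻¹ := by field_simp

lemma sumInt (c α : ℝ) (hc : 0 < c) (hα : 0 < α) :
    Summable fun n : ℤ => Real.exp (-(c * |(n : ℝ) / 2| ^ α)) := by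
  have key : Summable fun n : ℕ => Real.exp (-(c * |((n:ℤ) : ℝ) / 2| ^ α)) := by
    have h2 : (0:ℝ) < c * ((2:ℝ) ^ α)⁻¹ := by positivity
    refine (sumNat _ α h2 hα).congr fun n => ?_
    congr 1
    rw [abs_of_nonneg (by positivity), Real.div_rpow (by positivity) (by norm_num)]
    push_cast; ring
  refine Summable.of_nat_of_neg key (key.congr fun n => ?_)
  push_cast; rw [neg_div, abs_neg]

theorem stmt11 (s : ℝ) (hs : 1 < s) (c : ℕ × ℤ → ℂ)
    (H : ∀ a : ℕ × ℤ → ℂ,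
      (∃ h > (0 : ℝ), Summable fun p : ℕ × ℤ =>
          ‖a p‖ ^ 2 * Real.exp (2 * h * (|(p.2 : ℝ) / 2| + (p.1 : ℝ)) ^ (1 / s))) →
      Summable fun p : ℕ × ℤ => ‖a p * c p‖) :
    ∀ k > (0 : ℝ), ∃ M : ℝ, ∀ p : ℕ × ℤ,
      Real.exp (-k * (|(p.2 : ℝ) / 2| + (p.1 : ℝ)) ^ (1 / s)) * ‖c p‖ ≤ M := by
  intro k hk
  set α : ℝ := 1 / s with hαdef
  have hα : 0 < α := by positivity
  set w : ℕ × ℤ → ℝ := fun p => (|(p.2 : ℝ) / 2| + (p.1 : ℝ)) ^ α with hw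
  have hwnn : ∀ p, 0 ≤ w p := fun p => Real.rpow_nonneg (by positivity) _
  -- summability of exp(-k * w p)
  have hsum : Summable fun p : ℕ × ℤ => Real.exp (-(k * w p)) := by
    have hnat := sumNat (k/2) α (by positivity) hα
    have hint := sumInt (k/2) α (by positivity) hα
    refine Summable.of_nonneg_of_le (fun p => (Real.exp_pos _).le) (fun p => ?_)
      (hnat.mul_of_nonneg hint (fun _ => (Real.exp_pos _).le)
        (fun _ => (Real.exp_pos _).le))
    rw [← Real.exp_add]
    apply Real.exp_le_exp.mpr
    have hx : (0:ℝ) ≤ |(p.2 : ℝ) / 2| := abs_nonneg _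
    have hy : (0:ℝ) ≤ (p.1 : ℝ) := Nat.cast_nonneg _
    have h1 : |(p.2 : ℝ) / 2| ^ α ≤ w p :=
      Real.rpow_le_rpow hx (by linarith) hα.le
    have h2 : ((p.1 : ℕ) : ℝ) ^ α ≤ w p :=
      Real.rpow_le_rpow hy (by linarith) hα.le
    nlinarith [hwnn p]
  -- apply H
  have hHa := H (fun p => ((Real.exp (-(k * w p)) : ℝ) : ℂ)) ⟨k/2, by positivity, ?_⟩
  · have hnorm : ∀ p : ℕ × ℤ, ‖((Real.exp (-(k * w p)) : ℝ) : ℂ) * c p‖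
        = Real.exp (-k * w p) * ‖c p‖ := by
      intro p
      rw [norm_mul, Complex.norm_real, Real.norm_eq_abs, abs_of_pos (Real.exp_pos _), neg_mul]
    have hS : Summable fun p : ℕ × ℤ => Real.exp (-k * w p) * ‖c p‖ :=
      hHa.congr hnorm
    refine ⟨∑' p, Real.exp (-k * w p) * ‖c p‖, fun p => ?_⟩
    exact Summable.le_tsum hS p (fun q _ => by positivity)
  · refine hsum.congr fun p => ?_
    rw [Complex.norm_real, Real.norm_eq_abs, abs_of_pos (Real.exp_pos _), sq,
      ← Real.exp_add, ← Real.exp_add]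
    congr 1
    simp only [hw]
    ring
end

section
/- Let $s > 1$ and let $(c_{l,n})_{l\in\mathbb{N}_0,n\in\mathbb{Z}}$ be a double sequence such that for every $k>0$ the sequence $(e^{-k(|n/2|+|l|)^{1/s}}c_{l,n})$ is bounded, and such that for every $(a_{l,n})$ satisfying $\sum_{l,n}|a_{l,n}|^2 e^{2h(|n/2|+|l|)^{1/s}} < \infty$ for some $h > 0$, the sum $\sum_{l,n}|a_{l,n}c_{l,n}|$ is finite. Then $\sum_{l,n}|c_{l,n}|^2 e^{-2h(|n/2|+|l|)^{1/s}} < \infty$ for every $h > 0$. -/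
open Real Filter Asymptotics

lemma sum_nat_exp (u t : ℝ) (hu : 0 < u) (ht : 0 < t) :
    Summable fun n : ℕ => Real.exp (-u * (n : ℝ) ^ t) := by
  have hg : Summable fun n : ℕ => ((n : ℝ) ^ 2)⁻¹ := by
    simpa [one_div] using (Real.summable_one_div_nat_pow.mpr le_rfl)
  refine summable_of_isBigO_nat hg ?_
  have htend : Tendsto (fun n : ℕ => ((n : ℝ) ^ t) ^ (2 / t) * Real.exp (-u * (n : ℝ) ^ t))
      atTop (nhds 0) := by
    apply (tendsto_rpow_mul_exp_neg_mul_atTop_nhds_zero (2 / t) u hu).comp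
    exact (tendsto_rpow_atTop ht).comp tendsto_natCast_atTop_atTop
  have heq : ∀ᶠ n : ℕ in atTop,
      ((n : ℝ) ^ t) ^ (2 / t) * Real.exp (-u * (n : ℝ) ^ t)
        = Real.exp (-u * (n : ℝ) ^ t) / ((n : ℝ) ^ 2)⁻¹ := by
    filter_upwards [eventually_gt_atTop 0] with n hn
    have hn' : (0:ℝ) < (n:ℝ) := by exact_mod_cast hn
    have ht2 : t * (2 / t) = 2 := by field_simp
    rw [← Real.rpow_mul hn'.le, ht2, div_eq_mul_inv, inv_inv, Real.rpow_two, mul_comm]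
  apply isBigO_of_div_tendsto_nhds ?_ 0 ((tendsto_congr' heq).mp htend)
  filter_upwards [eventually_gt_atTop 0] with n hn hzero
  exact absurd hzero (by positivity)

lemma key (s u : ℝ) (hs : 1 < s) (hu : 0 < u) :
    Summable fun p : ℕ × ℤ => Real.exp (-u * (|(p.2 : ℝ) / 2| + (p.1 : ℝ)) ^ (1 / s)) := by
  have hs0 : (0:ℝ) < 1 / s := by positivity
  have hN : Summable fun n : ℕ => Real.exp (-(u/4) * (n : ℝ) ^ (1/s)) :=
    sum_nat_exp (u/4) (1/s) (by positivity) hs0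
  have hZ : Summable fun n : ℤ => Real.exp (-(u/4) * (|(n : ℝ)|) ^ (1/s)) := by
    apply Summable.of_nat_of_neg <;> simpa using hN
  have hprod : Summable fun p : ℕ × ℤ =>
      Real.exp (-(u/4) * (p.1 : ℝ) ^ (1/s)) * Real.exp (-(u/4) * (|(p.2 : ℝ)|) ^ (1/s)) :=
    hN.mul_of_nonneg hZ (fun n => (Real.exp_pos _).le) (fun n => (Real.exp_pos _).le)
  refine hprod.of_nonneg_of_le (fun p => (Real.exp_pos _).le) ?_
  intro p
  obtain ⟨l, n⟩ := p
  rw [← Real.exp_add]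
  apply Real.exp_le_exp.mpr
  set a : ℝ := |(n : ℝ) / 2| with ha
  have ha0 : 0 ≤ a := abs_nonneg _
  have hl0 : 0 ≤ (l : ℝ) := Nat.cast_nonneg _
  have h1 : (l : ℝ) ^ (1/s) ≤ (a + l) ^ (1/s) :=
    Real.rpow_le_rpow hl0 (by linarith) hs0.le
  have h2 : a ^ (1/s) ≤ (a + l) ^ (1/s) :=
    Real.rpow_le_rpow ha0 (by linarith) hs0.le
  have h3 : |(n : ℝ)| ^ (1/s) ≤ 2 * a ^ (1/s) := by
    have habs : |(n : ℝ)| = 2 * a := by rw [ha, abs_div]; norm_num; ring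
    rw [habs, Real.mul_rpow (by norm_num) ha0]
    have h2le : (2:ℝ) ^ (1/s) ≤ 2 := by
      nth_rewrite 2 [show (2:ℝ) = 2 ^ (1:ℝ) by norm_num]
      apply Real.rpow_le_rpow_of_exponent_le (by norm_num)
      rw [div_le_one (by linarith)]; linarith
    exact mul_le_mul_of_nonneg_right h2le (Real.rpow_nonneg ha0 _)
  nlinarith [Real.rpow_nonneg ha0 (1/s), Real.rpow_nonneg hl0 (1/s),
    Real.rpow_nonneg (show (0:ℝ) ≤ a + l by linarith) (1/s)]

theorem stmt12 (s : ℝ) (hs : 1 < s) (c : ℕ × ℤ → ℂ)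
    (hbdd : ∀ k > (0 : ℝ), ∃ M : ℝ, ∀ p : ℕ × ℤ,
      Real.exp (-k * (|(p.2 : ℝ) / 2| + (p.1 : ℝ)) ^ (1 / s)) * ‖c p‖ ≤ M)
    (H : ∀ a : ℕ × ℤ → ℂ,
      (∃ h > (0 : ℝ), Summable fun p : ℕ × ℤ =>
          ‖a p‖ ^ 2 * Real.exp (2 * h * (|(p.2 : ℝ) / 2| + (p.1 : ℝ)) ^ (1 / s))) →
      Summable fun p : ℕ × ℤ => ‖a p * c p‖) :
    ∀ h > (0 : ℝ), Summable fun p : ℕ × ℤ =>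
      ‖c p‖ ^ 2 * Real.exp (-2 * h * (|(p.2 : ℝ) / 2| + (p.1 : ℝ)) ^ (1 / s)) := by
  intro h hh
  set w : ℕ × ℤ → ℝ := fun p => (|(p.2 : ℝ) / 2| + (p.1 : ℝ)) ^ (1 / s) with hw
  set a : ℕ × ℤ → ℂ := fun p => (starRingEnd ℂ) (c p) * Real.exp (-2 * h * w p) with hadef
  have hna : ∀ p, ‖a p‖ = ‖c p‖ * Real.exp (-2 * h * w p) := fun p => by
    simp only [hadef, norm_mul, RCLike.norm_conj, Complex.norm_real, Real.norm_eq_abs,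
      Real.abs_exp]
  have key1 := H a ⟨h, hh, ?_⟩
  · refine key1.congr fun p => ?_
    rw [norm_mul, hna p]
    ring
  · -- Summable ‖a p‖² exp(2h w p)
    obtain ⟨M, hM⟩ := hbdd (h/2) (by linarith)
    have hsum := key s h hs hh
    refine (hsum.mul_left (M^2)).of_nonneg_of_le (fun p => by positivity) fun p => ?_
    show ‖a p‖ ^ 2 * Real.exp (2 * h * w p) ≤ M ^ 2 * Real.exp (-h * w p)
    have hc : ‖c p‖ ≤ M * Real.exp ((h/2) * w p) := by
      have h1 := hM p
      rw [neg_mul, Real.exp_neg, inv_mul_le_iff₀ (Real.exp_pos _)] at h1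
      exact h1.trans_eq (mul_comm _ _)
    have hcsq : ‖c p‖ ^ 2 ≤ M ^ 2 * Real.exp (h * w p) := by
      calc ‖c p‖ ^ 2 ≤ (M * Real.exp ((h/2) * w p)) ^ 2 :=
            pow_le_pow_left₀ (norm_nonneg _) hc 2
        _ = M ^ 2 * Real.exp (h * w p) := by
            rw [mul_pow, ← Real.exp_nat_mul]
            congr 2
            push_cast; ring
    rw [hna p, mul_pow, ← Real.exp_nat_mul]
    calc ‖c p‖ ^ 2 * Real.exp ((2:ℕ) * (-2 * h * w p)) * Real.exp (2 * h * w p)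
        ≤ (M ^ 2 * Real.exp (h * w p)) * Real.exp ((2:ℕ) * (-2 * h * w p))
            * Real.exp (2 * h * w p) := by
          gcongr
      _ = M ^ 2 * Real.exp (-h * w p) := by
          rw [mul_assoc, mul_assoc, ← Real.exp_add, ← Real.exp_add]
          congr 2
          push_cast; ring
end
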